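/- On every compact subset K of the open set Ω = { z = x + i·y : x > 0, y ≠ 0 } of the complex plane, the functions z ↦ c_N(z) = (∑_{n=1}^{N} n^{-z}) + (N+1)^{-z}/(1−z) · (1 − x − y/tan(y·ln((N+2)/(N+1)))) converge uniformly, as N → ∞, to the analytically continued Riemann zeta function z ↦ ζ(z). -/

import Mathlib

open Filter

/-- The `N`-th partial sum of the Riemann series: `ζ_N(z) = ∑_{n=1}^{N} n^{-z}`. -/
noncomputable def zetaPartial (z : ℂ) (N : ℕ) : ℂ :=
  ∑ n ∈ Finset.Icc 1 N, (n : ℂ) ^ (-z)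

/-- The correction term
`r_N(z) = (N+1)^{-z}/(1−z) · (1 − x − y/tan(y·ln((N+2)/(N+1))))` where `x = Re z`, `y = Im z`. -/
noncomputable def radialCorrection (z : ℂ) (N : ℕ) : ℂ :=
  ((N : ℂ) + 1) ^ (-z) / (1 - z) *
    ((1 - z.re - z.im / Real.tan (z.im * Real.log (((N : ℝ) + 2) / ((N : ℝ) + 1))) : ℝ) : ℂ)

/-- The radial-convergence sequence `c_N(z) = ζ_N(z) + r_N(z)`. -/
noncomputable def radialSeq (z : ℂ) (N : ℕ) : ℂ :=
  zetaPartial z N + radialCorrection z N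

/-!
For `0 < Re z`, `z ≠ 1`, comparing each `n^{-z}` with `∫_n^{n+1} t^{-z} dt` gives
`ζ(z) = ζ_N(z) + (N+1)^{1-z}/(z-1) + O(|z| (N+1)^{-Re z} / Re z)`, first for `Re z > 1` by
telescoping and then by analytic continuation. The cotangent in `r_N` is tuned so that
`r_N(z) = (N+1)^{1-z}/(z-1) + O((N+1)^{-Re z})`: with `h = log ((N+2)/(N+1))` one has
`1/h = N + 1 + O(1)` and `y cot (y h) = 1/h + O(y² h)`. All error terms are uniform on compact
subsets of `Ω`.
-/

open Complex Topology

lemma summable_rpow_nat_add {p : ℝ} (hp : p < -1) (m : ℕ) :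
    Summable fun k : ℕ => ((k + m : ℕ) : ℝ) ^ p :=
  (summable_nat_add_iff m).2 (Real.summable_nat_rpow.2 hp)

lemma tendsto_natCast_cpow_atTop_zero {w : ℂ} (hw : w.re < 0) :
    Tendsto (fun n : ℕ => (n : ℂ) ^ w) atTop (𝓝 0) := by
  rw [tendsto_zero_iff_norm_tendsto_zero]
  simp_rw [norm_natCast_cpow_of_re_ne_zero _ hw.ne]
  simpa [Function.comp_def] using
    (tendsto_rpow_neg_atTop (neg_pos.2 hw)).comp tendsto_natCast_atTop_atTop

lemma hasSum_sub_succ_of_tendsto_zero {G : Type*} [AddCommGroup G] [TopologicalSpace G]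
    [IsTopologicalAddGroup G] [T2Space G] {f : ℕ → G}
    (hs : Summable fun n => f n - f (n + 1)) (hf : Tendsto f atTop (𝓝 0)) :
    HasSum (fun n => f n - f (n + 1)) (f 0) := by
  refine hs.hasSum_iff_tendsto_nat.2 ?_
  simp_rw [Finset.sum_range_sub']
  simpa using tendsto_const_nhds.sub hf

lemma tendstoUniformlyOn_of_eventually_dist_le {ι α β : Type*} [PseudoMetricSpace β]
    {F : ι → α → β} {f : α → β} {l : Filter ι} {s : Set α} {u : ι → ℝ}
    (hu : Tendsto u l (𝓝 0)) (h : ∀ᶠ i in l, ∀ x ∈ s, dist (f x) (F i x) ≤ u i) :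
    TendstoUniformlyOn F f l s := by
  rw [Metric.tendstoUniformlyOn_iff]
  intro ε hε
  filter_upwards [h, hu.eventually (gt_mem_nhds hε)] with i hi hui x hx
  exact (hi x hx).trans_lt hui

lemma isPreconnected_re_pos_diff_one : IsPreconnected ({z : ℂ | 0 < z.re} \ {1}) := by
  have hupper := (convex_halfSpace_re_gt 0).inter (convex_halfSpace_im_gt 0)
  have hlower := (convex_halfSpace_re_gt 0).inter (convex_halfSpace_im_lt 0)
  have hstrip := (convex_halfSpace_re_gt 0).inter (convex_halfSpace_re_lt 1)
  have hright := convex_halfSpace_re_gt 1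
  convert ((hupper.isPreconnected.union (2 + I) (by simp) (by simp) hright.isPreconnected).union
      (1 / 2 + I) (by simp) (by norm_num)
      (hlower.isPreconnected.union (1 / 2 - I) (by simp) (by norm_num) hstrip.isPreconnected))
    using 1
  ext z
  simp only [Set.mem_sdiff, Set.mem_ofPred_eq, Set.mem_singleton_iff, Set.mem_union,
    Set.mem_inter_iff, Complex.ext_iff, one_re, one_im]
  grind

lemma abs_div_tan_sub_one_le {u : ℝ} (hu : u ≠ 0) (hu₁ : |u| ≤ 1) :
    |u / Real.tan u - 1| ≤ u ^ 2 := by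
  wlog hpos : 0 < u generalizing u
  · have := this (neg_ne_zero.2 hu) (by rwa [abs_neg]) (by grind)
    rwa [Real.tan_neg, neg_div_neg_eq, neg_sq] at this
  rw [abs_of_pos hpos] at hu₁
  have hsin : 0 < Real.sin u :=
    Real.sin_pos_of_pos_of_lt_pi hpos (by linarith [Real.pi_gt_three])
  have hsin_lo : u - u ^ 3 / 6 < Real.sin u := Real.sin_gt_sub_cube hpos
  have hsin_hi : Real.sin u < u := Real.sin_lt hpos
  have hcos_hi : Real.cos u ≤ 1 := Real.cos_le_one u
  have hcos_lo : 1 - u ^ 2 / 2 ≤ Real.cos u := Real.one_sub_sq_div_two_le_cos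
  rw [Real.tan_eq_sin_div_cos, div_div_eq_mul_div, div_sub_one hsin.ne', abs_div,
    abs_of_pos hsin, div_le_iff₀ hsin, abs_le]
  constructor <;> nlinarith [mul_le_mul_of_nonneg_left hsin_lo.le (sq_nonneg u),
    mul_le_mul_of_nonneg_left hcos_lo hpos.le, mul_le_mul_of_nonneg_left hcos_hi hpos.le,
    pow_le_one₀ hpos.le hu₁ (n := 2)]

lemma inv_log_add_one_div_mem_Icc {a : ℝ} (ha : 0 < a) :
    (Real.log ((a + 1) / a))⁻¹ ∈ Set.Icc a (a + 1) := by
  have hq : 0 < (a + 1) / a := by positivity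
  have hlo : 1 / (a + 1) ≤ Real.log ((a + 1) / a) := by
    have := Real.one_sub_inv_le_log_of_pos hq
    rwa [inv_div, one_sub_div (by positivity), add_sub_cancel_left] at this
  have hhi : Real.log ((a + 1) / a) ≤ 1 / a := by
    have := Real.log_le_sub_one_of_pos hq
    rwa [div_sub_one ha.ne', add_sub_cancel_left] at this
  have hpos : 0 < Real.log ((a + 1) / a) := lt_of_lt_of_le (by positivity) hlo
  constructor
  · rwa [le_inv_comm₀ ha hpos, ← one_div]
  · rwa [inv_le_comm₀ hpos (by positivity), ← one_div]

lemma norm_ofReal_cpow_neg_sub_le {z : ℂ} (hre : 0 < z.re) {a t : ℝ} (ha : 0 < a)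
    (ht : t ∈ Set.Icc a (a + 1)) :
    ‖(t : ℂ) ^ (-z) - (a : ℂ) ^ (-z)‖ ≤ ‖z‖ * a ^ (-z.re - 1) := by
  have hz : -z ≠ 0 := neg_ne_zero.2 fun h => by simp [h] at hre
  have hderiv : ∀ s ∈ Set.Icc a (a + 1), HasDerivWithinAt (fun s : ℝ => (s : ℂ) ^ (-z))
      (-z * (s : ℂ) ^ (-z - 1)) (Set.Icc a (a + 1)) s := fun s hs =>
    (hasDerivAt_ofReal_cpow_const (ha.trans_le hs.1).ne' hz).hasDerivWithinAt
  have hbound : ∀ s ∈ Set.Icc a (a + 1), ‖-z * (s : ℂ) ^ (-z - 1)‖ ≤ ‖z‖ * a ^ (-z.re - 1) := by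
    intro s hs
    rw [norm_mul, norm_neg, norm_cpow_eq_rpow_re_of_pos (ha.trans_le hs.1), sub_re, neg_re,
      one_re]
    exact mul_le_mul_of_nonneg_left (Real.rpow_le_rpow_of_nonpos ha hs.1 (by linarith))
      (norm_nonneg z)
  calc ‖(t : ℂ) ^ (-z) - (a : ℂ) ^ (-z)‖ ≤ ‖z‖ * a ^ (-z.re - 1) * ‖t - a‖ :=
        (convex_Icc a (a + 1)).norm_image_sub_le_of_norm_hasDerivWithin_le hderiv hbound
          (Set.left_mem_Icc.2 (by linarith)) ht
    _ ≤ ‖z‖ * a ^ (-z.re - 1) * 1 := by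
        gcongr
        rw [Real.norm_of_nonneg (by linarith [ht.1])]
        linarith [ht.2]
    _ = ‖z‖ * a ^ (-z.re - 1) := mul_one _

/-- `n^{-z} - ∫_n^{n+1} t^{-z} dt`, with the integral evaluated through its primitive. -/
noncomputable def zetaTailTerm (z : ℂ) (n : ℕ) : ℂ :=
  (n : ℂ) ^ (-z) - ((n : ℂ) ^ (1 - z) - ((n : ℂ) + 1) ^ (1 - z)) / (z - 1)

section ZetaTail

variable {z : ℂ} {m : ℕ}

lemma norm_zetaTailTerm_le (hre : 0 < z.re) (hz : z ≠ 1) {n : ℕ} (hn : 0 < n) :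
    ‖zetaTailTerm z n‖ ≤ ‖z‖ * (n : ℝ) ^ (-z.re - 1) := by
  have hn' : (0 : ℝ) < n := Nat.cast_pos.2 hn
  have h1z : 1 - z ≠ 0 := sub_ne_zero.2 (Ne.symm hz)
  set c : ℂ := (n : ℂ) ^ (-z)
  -- `zetaTailTerm z n = φ n - φ (n + 1)` for a primitive `φ` of `t ↦ t^{-z} - n^{-z}`.
  set φ : ℝ → ℂ := fun t => (t : ℂ) ^ (1 - z) / (1 - z) - c * t
  have hderiv : ∀ t ∈ Set.Icc (n : ℝ) (n + 1),
      HasDerivWithinAt φ ((t : ℂ) ^ (-z) - c) (Set.Icc (n : ℝ) (n + 1)) t := by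
    intro t ht
    have h := ((hasDerivAt_ofReal_cpow_const (hn'.trans_le ht.1).ne' h1z).div_const (1 - z)).fun_sub
      ((hasDerivAt_id t).ofReal_comp.const_mul c)
    rw [mul_div_cancel_left₀ _ h1z, sub_sub_cancel_left, ofReal_one, mul_one] at h
    exact h.hasDerivWithinAt
  have h := (convex_Icc (n : ℝ) (n + 1)).norm_image_sub_le_of_norm_hasDerivWithin_le hderiv
    (fun t ht => norm_ofReal_cpow_neg_sub_le hre hn' ht) (Set.left_mem_Icc.2 (by linarith))
    (Set.right_mem_Icc.2 (by linarith))
  have hφ : zetaTailTerm z n = -(φ ((n : ℝ) + 1) - φ n) := by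
    simp only [zetaTailTerm, φ, c, ofReal_natCast, ofReal_add, ofReal_one]
    field_simp [sub_ne_zero.2 hz]
    ring
  rw [hφ, norm_neg]
  simpa using h

lemma norm_zetaTailTerm_le_of_le {x₀ B : ℝ} (hx₀ : 0 < x₀) (hx : x₀ ≤ z.re) (hB : ‖z‖ ≤ B)
    (hz : z ≠ 1) {n : ℕ} (hn : 0 < n) :
    ‖zetaTailTerm z n‖ ≤ B * (n : ℝ) ^ (-x₀ - 1) := by
  have hn' : (1 : ℝ) ≤ n := Nat.one_le_cast.2 hn
  calc ‖zetaTailTerm z n‖ ≤ ‖z‖ * (n : ℝ) ^ (-z.re - 1) :=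
        norm_zetaTailTerm_le (hx₀.trans_le hx) hz hn
    _ ≤ B * (n : ℝ) ^ (-x₀ - 1) :=
        mul_le_mul hB (Real.rpow_le_rpow_of_exponent_le hn' (by linarith)) (by positivity)
          ((norm_nonneg z).trans hB)

lemma differentiableAt_zetaTailTerm {n : ℕ} (hn : 0 < n) (hz : z ≠ 1) :
    DifferentiableAt ℂ (zetaTailTerm · n) z := by
  have hn₀ : (n : ℂ) ≠ 0 := Nat.cast_ne_zero.2 hn.ne'
  have hn₁ : (n : ℂ) + 1 ≠ 0 := by exact_mod_cast n.succ_ne_zero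
  unfold zetaTailTerm
  fun_prop (disch := first | exact Or.inl hn₀ | exact Or.inl hn₁ | exact sub_ne_zero.2 hz)

noncomputable def zetaTail (z : ℂ) (m : ℕ) : ℂ :=
  ∑' k : ℕ, zetaTailTerm z (k + m)

lemma summable_zetaTailTerm (hre : 0 < z.re) (hz : z ≠ 1) (hm : 0 < m) :
    Summable fun k : ℕ => zetaTailTerm z (k + m) :=
  .of_norm_bounded ((summable_rpow_nat_add (by linarith) m).mul_left ‖z‖)
    fun k => norm_zetaTailTerm_le hre hz (by omega)

lemma norm_zetaTail_le {x₀ B : ℝ} (hx₀ : 0 < x₀) (hx : x₀ ≤ z.re) (hB : ‖z‖ ≤ B) (hz : z ≠ 1)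
    (hm : 0 < m) :
    ‖zetaTail z m‖ ≤ B * ∑' k : ℕ, ((k + m : ℕ) : ℝ) ^ (-x₀ - 1) := by
  rw [← tsum_mul_left]
  exact tsum_of_norm_bounded ((summable_rpow_nat_add (by linarith) m).mul_left B).hasSum
    fun k => norm_zetaTailTerm_le_of_le hx₀ hx hB hz (by omega)

lemma differentiableAt_zetaTail (hre : 0 < z.re) (hz : z ≠ 1) (hm : 0 < m) :
    DifferentiableAt ℂ (zetaTail · m) z := by
  set U : Set ℂ := {w | z.re / 2 < w.re ∧ ‖w‖ < ‖z‖ + 1 ∧ w ≠ 1}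
  have hU : IsOpen U := (isOpen_lt continuous_const continuous_re).inter
    ((isOpen_lt continuous_norm continuous_const).inter isOpen_ne)
  have hzU : z ∈ U := ⟨by linarith, by linarith, hz⟩
  refine (differentiableOn_tsum_of_summable_norm
    ((summable_rpow_nat_add (p := -(z.re / 2) - 1) (by linarith) m).mul_left (‖z‖ + 1))
    (fun k w hw => (differentiableAt_zetaTailTerm (by omega) hw.2.2).differentiableWithinAt) hU
    fun k w hw => ?_).differentiableAt (hU.mem_nhds hzU)
  exact norm_zetaTailTerm_le_of_le (by linarith) hw.1.le hw.2.1.le hw.2.2 (by omega)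

end ZetaTail

lemma zetaPartial_eq_sum_range {z : ℂ} (hz : z ≠ 0) (N : ℕ) :
    zetaPartial z N = ∑ n ∈ Finset.range (N + 1), (n : ℂ) ^ (-z) := by
  rw [Finset.range_eq_Ico, Finset.sum_eq_sum_Ico_succ_bot (by omega), Nat.cast_zero,
    zero_cpow (neg_ne_zero.2 hz), zero_add, zero_add, Finset.Ico_add_one_right_eq_Icc, zetaPartial]

lemma differentiable_zetaPartial (N : ℕ) : Differentiable ℂ (zetaPartial · N) := by
  intro z
  unfold zetaPartial
  refine DifferentiableAt.fun_sum fun n hn => ?_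
  have hn₀ : (n : ℂ) ≠ 0 := Nat.cast_ne_zero.2 (by grind)
  fun_prop (disch := exact Or.inl hn₀)

lemma riemannZeta_eq_of_one_lt_re (N : ℕ) {z : ℂ} (hz : 1 < z.re) :
    riemannZeta z = zetaPartial z N + ((N : ℂ) + 1) ^ (1 - z) / (z - 1) + zetaTail z (N + 1) := by
  have hz₀ : z ≠ 0 := fun h => by norm_num [h] at hz
  have hz₁ : z ≠ 1 := fun h => by norm_num [h] at hz
  set m := N + 1
  set b : ℕ → ℂ := fun k => ((k + m : ℕ) : ℂ) ^ (1 - z) / (z - 1)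
  have hsum : Summable fun n : ℕ => (n : ℂ) ^ (-z) := by
    simpa [cpow_neg] using Complex.summable_one_div_nat_cpow.2 hz
  have hζ : riemannZeta z = ∑' n : ℕ, (n : ℂ) ^ (-z) := by
    simp [zeta_eq_tsum_one_div_nat_cpow hz, cpow_neg]
  have hterm : ∀ k : ℕ, ((k + m : ℕ) : ℂ) ^ (-z) = (b k - b (k + 1)) + zetaTailTerm z (k + m) := by
    intro k
    simp only [b, zetaTailTerm, add_right_comm k 1 m, Nat.cast_add_one]
    ring
  have htail : Summable fun k : ℕ => zetaTailTerm z (k + m) :=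
    summable_zetaTailTerm (by linarith) hz₁ N.succ_pos
  have htelescope : HasSum (fun k => b k - b (k + 1)) (b 0) := by
    refine hasSum_sub_succ_of_tendsto_zero (((summable_nat_add_iff m).2 hsum).sub htail |>.congr
      fun k => by rw [hterm]; ring) ?_
    rw [← zero_div (z - 1)]
    exact ((tendsto_natCast_cpow_atTop_zero (w := 1 - z) (by simp; linarith)).comp
      (tendsto_add_atTop_nat m)).div_const (z - 1)
  rw [hζ, ← hsum.sum_add_tsum_nat_add m, ← zetaPartial_eq_sum_range hz₀, add_assoc,
    tsum_congr hterm, htelescope.summable.tsum_add htail, htelescope.tsum_eq]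
  simp [b, m, zetaTail]

lemma riemannZeta_eq_zetaPartial_add_zetaTail (N : ℕ) {z : ℂ} (hre : 0 < z.re) (hz : z ≠ 1) :
    riemannZeta z = zetaPartial z N + ((N : ℂ) + 1) ^ (1 - z) / (z - 1) + zetaTail z (N + 1) := by
  set F : ℂ → ℂ := fun w => zetaPartial w N + ((N : ℂ) + 1) ^ (1 - w) / (w - 1) + zetaTail w (N + 1)
  set U : Set ℂ := {w : ℂ | 0 < w.re} \ {1}
  have hU : IsOpen U := (isOpen_lt continuous_const continuous_re).sdiff isClosed_singleton
  have hN : (N : ℂ) + 1 ≠ 0 := by exact_mod_cast N.succ_ne_zero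
  have hζ : AnalyticOnNhd ℂ riemannZeta U :=
    DifferentiableOn.analyticOnNhd
      (fun w hw => (differentiableAt_riemannZeta hw.2).differentiableWithinAt) hU
  have hF : AnalyticOnNhd ℂ F U := by
    refine DifferentiableOn.analyticOnNhd (fun w hw => ?_) hU
    have hw₁ : w - 1 ≠ 0 := sub_ne_zero.2 hw.2
    have := differentiableAt_zetaTail hw.1 hw.2 N.succ_pos
    have := differentiable_zetaPartial N w
    apply DifferentiableAt.differentiableWithinAt
    fun_prop (disch := first | assumption | exact Or.inl hN)
  have heq : riemannZeta =ᶠ[𝓝 2] F := by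
    have h2 : {w : ℂ | 1 < w.re} ∈ 𝓝 2 :=
      (isOpen_lt continuous_const continuous_re).mem_nhds (by norm_num)
    filter_upwards [h2] with w hw using riemannZeta_eq_of_one_lt_re N hw
  exact hζ.eqOn_of_preconnected_of_eventuallyEq hF isPreconnected_re_pos_diff_one
    (by norm_num [U]) heq ⟨hre, hz⟩

lemma abs_add_one_sub_sub_div_tan_le {a x y : ℝ} (ha : 0 < a) (hy : y ≠ 0) (hya : |y| ≤ a) :
    |a + 1 - x - y / Real.tan (y * Real.log ((a + 1) / a))| ≤ 1 + |x| + y ^ 2 / a := by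
  set h := Real.log ((a + 1) / a)
  obtain ⟨hh_lo, hh_hi⟩ := inv_log_add_one_div_mem_Icc ha
  have hh : 0 < h := inv_pos.1 (ha.trans_le hh_lo)
  have hh_le : h ≤ a⁻¹ := (le_inv_comm₀ ha hh).1 hh_lo
  have hyh : |y * h| ≤ 1 := by
    rw [abs_mul, abs_of_pos hh]
    calc |y| * h ≤ a * a⁻¹ := by gcongr
      _ = 1 := mul_inv_cancel₀ ha.ne'
  -- `y / tan (y h) = h⁻¹ ⋅ (y h) / tan (y h)`, and `(y h) / tan (y h)` is `1 + O((y h)²)`.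
  have hcot : |h⁻¹ - y / Real.tan (y * h)| ≤ y ^ 2 / a := by
    have e : h⁻¹ - y / Real.tan (y * h) = -h⁻¹ * (y * h / Real.tan (y * h) - 1) := by
      field_simp
      ring
    rw [e, abs_mul, abs_neg, abs_inv, abs_of_pos hh]
    calc h⁻¹ * |y * h / Real.tan (y * h) - 1| ≤ h⁻¹ * (y * h) ^ 2 := by
          gcongr
          exact abs_div_tan_sub_one_le (mul_ne_zero hy hh.ne') hyh
      _ = y ^ 2 * h := by field_simp
      _ ≤ y ^ 2 / a := by
          rw [div_eq_mul_inv]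
          gcongr
  calc |a + 1 - x - y / Real.tan (y * h)|
      = |(a + 1 - h⁻¹) + (h⁻¹ - y / Real.tan (y * h)) + -x| := by ring_nf
    _ ≤ |a + 1 - h⁻¹| + |h⁻¹ - y / Real.tan (y * h)| + |-x| := abs_add_three _ _ _
    _ ≤ 1 + y ^ 2 / a + |x| :=
        add_le_add (add_le_add (abs_le.2 ⟨by linarith, by linarith⟩) hcot) (abs_neg x).le
    _ = 1 + |x| + y ^ 2 / a := by ring

lemma norm_radialCorrection_sub_le {z : ℂ} {N : ℕ} (him : z.im ≠ 0) (hN : |z.im| ≤ N + 1) :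
    ‖radialCorrection z N - ((N : ℂ) + 1) ^ (1 - z) / (z - 1)‖ ≤
      ((N : ℝ) + 1) ^ (-z.re) * (1 + |z.re| + z.im ^ 2 / (N + 1)) * ‖(1 - z)⁻¹‖ := by
  have hN₀ : (N : ℂ) + 1 ≠ 0 := by exact_mod_cast N.succ_ne_zero
  set S : ℝ := (N + 1) + 1 - z.re -
    z.im / Real.tan (z.im * Real.log (((N : ℝ) + 1 + 1) / ((N : ℝ) + 1)))
  have hS : |S| ≤ 1 + |z.re| + z.im ^ 2 / (N + 1) :=
    abs_add_one_sub_sub_div_tan_le (by positivity) him hN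
  have e : radialCorrection z N - ((N : ℂ) + 1) ^ (1 - z) / (z - 1) =
      ((N : ℂ) + 1) ^ (-z) * (S * (1 - z)⁻¹) := by
    rw [radialCorrection, show (1 : ℂ) - z = -z + 1 by ring, cpow_add _ _ hN₀, cpow_one,
      show ((N : ℝ) + 2) = (N + 1) + 1 by ring, ← neg_sub 1 z, div_neg]
    simp only [S, ofReal_sub, ofReal_add, ofReal_natCast, ofReal_one, ofReal_div]
    ring
  rw [e, norm_mul, norm_mul, norm_real, Real.norm_eq_abs, ← mul_assoc,
    show ((N : ℂ) + 1) = ((N + 1 : ℝ) : ℂ) by push_cast; rfl,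
    norm_cpow_eq_rpow_re_of_pos (by positivity), neg_re]
  gcongr

lemma norm_riemannZeta_sub_radialSeq_le {z : ℂ} {N : ℕ} {x₀ B C : ℝ} (hx₀ : 0 < x₀)
    (hx : x₀ ≤ z.re) (him : z.im ≠ 0) (hB : ‖z‖ ≤ B) (hBN : B ≤ N + 1) (hC : ‖(1 - z)⁻¹‖ ≤ C) :
    ‖riemannZeta z - radialSeq z N‖ ≤
      ((N : ℝ) + 1) ^ (-x₀) * ((1 + B + B ^ 2) * C) +
        B * ∑' k : ℕ, ((k + (N + 1) : ℕ) : ℝ) ^ (-x₀ - 1) := by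
  have hz : z ≠ 1 := fun h => him (by simp [h])
  have hN : (1 : ℝ) ≤ N + 1 := by linarith [N.cast_nonneg (α := ℝ)]
  have hre : |z.re| ≤ B := (abs_re_le_norm z).trans hB
  have him_le : |z.im| ≤ B := (abs_im_le_norm z).trans hB
  have hcorr := norm_radialCorrection_sub_le him (him_le.trans hBN)
  have hsq : z.im ^ 2 / (N + 1) ≤ B ^ 2 := by
    rw [← sq_abs]
    exact (div_le_self (sq_nonneg _) hN).trans (pow_le_pow_left₀ (abs_nonneg _) him_le 2)
  rw [riemannZeta_eq_zetaPartial_add_zetaTail N (hx₀.trans_le hx) hz, radialSeq]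
  calc _ = ‖(radialCorrection z N - ((N : ℂ) + 1) ^ (1 - z) / (z - 1)) - zetaTail z (N + 1)‖ := by
        rw [← norm_neg]
        ring_nf
    _ ≤ ‖radialCorrection z N - ((N : ℂ) + 1) ^ (1 - z) / (z - 1)‖ + ‖zetaTail z (N + 1)‖ :=
        norm_sub_le _ _
    _ ≤ _ := by
        refine add_le_add (hcorr.trans ?_) (norm_zetaTail_le hx₀ hx hB hz N.succ_pos)
        rw [mul_assoc]
        gcongr
        nlinarith [sq_nonneg (2 * B + 1)]

/-- On every compact subset `K` of `Ω = {z : 0 < Re z, Im z ≠ 0}`, the functions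
`z ↦ c_N(z)` converge uniformly to the analytically continued Riemann zeta function. -/
theorem radialSeq_tendstoUniformlyOn_riemannZeta (K : Set ℂ) (hK : IsCompact K)
    (hKΩ : K ⊆ {z : ℂ | 0 < z.re ∧ z.im ≠ 0}) :
    TendstoUniformlyOn (fun (N : ℕ) (z : ℂ) => radialSeq z N) riemannZeta atTop K := by
  obtain ⟨x₀, hx₀, hx₀K⟩ :=
    hK.exists_forall_le' continuous_re.continuousOn fun z hz => (hKΩ hz).1
  obtain ⟨B, hB⟩ := hK.exists_bound_of_continuousOn continuousOn_id
  have h1z : ∀ z ∈ K, 1 - z ≠ 0 := fun z hz h => (hKΩ hz).2 (by simp [← sub_eq_zero.1 h])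
  obtain ⟨C, hC⟩ := hK.exists_bound_of_continuousOn
    ((continuousOn_const.sub continuousOn_id).inv₀ h1z)
  have hbound : Tendsto (fun N : ℕ => ((N : ℝ) + 1) ^ (-x₀) * ((1 + B + B ^ 2) * C) +
      B * ∑' k : ℕ, ((k + (N + 1) : ℕ) : ℝ) ^ (-x₀ - 1)) atTop (𝓝 0) := by
    have hpow := (tendsto_rpow_neg_atTop hx₀).comp
      (tendsto_atTop_add_const_right atTop 1 tendsto_natCast_atTop_atTop)
    have htail := (tendsto_sum_nat_add fun k : ℕ => (k : ℝ) ^ (-x₀ - 1)).comp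
      (tendsto_add_atTop_nat 1)
    simpa using (hpow.mul_const ((1 + B + B ^ 2) * C)).add (htail.const_mul B)
  refine tendstoUniformlyOn_of_eventually_dist_le hbound ?_
  filter_upwards [eventually_ge_atTop ⌈B⌉₊] with N hN z hz
  rw [dist_eq_norm]
  exact norm_riemannZeta_sub_radialSeq_le hx₀ (hx₀K z hz) (hKΩ hz).2 (hB z hz)
    ((Nat.ceil_le.1 hN).trans (by linarith)) (hC z hz)
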